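/- arXiv:1408.0483 — 4 statements merged into one kernel-verified Lean document; each statement's English description precedes it below -/
import Mathlib

section
/- The element w = q²·x² + q⁻²·y² + q²·z² − q·x·y·z is central in the algebra B'_q, i.e., w·b = b·w for every b ∈ B'_q. -/
noncomputable section

/-- Generators of the algebra `B'_q`. -/
inductive BGen : Type
  | x | y | z

/-- The defining relations of `B'_q`: `[x,y]_q = (q²-q⁻²)z`, `[z,x]_q = (q²-q⁻²)y`,
`[y,z]_q = (q²-q⁻²)x`, where `[a,b]_q = q·a·b - q⁻¹·b·a`. -/
inductive BRel (q : ℂ) : FreeAlgebra ℂ BGen → FreeAlgebra ℂ BGen → Prop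
  | xy : BRel q
      (q • (FreeAlgebra.ι ℂ BGen.x * FreeAlgebra.ι ℂ BGen.y) -
        q⁻¹ • (FreeAlgebra.ι ℂ BGen.y * FreeAlgebra.ι ℂ BGen.x))
      ((q ^ 2 - q ^ (-2 : ℤ)) • FreeAlgebra.ι ℂ BGen.z)
  | zx : BRel q
      (q • (FreeAlgebra.ι ℂ BGen.z * FreeAlgebra.ι ℂ BGen.x) -
        q⁻¹ • (FreeAlgebra.ι ℂ BGen.x * FreeAlgebra.ι ℂ BGen.z))
      ((q ^ 2 - q ^ (-2 : ℤ)) • FreeAlgebra.ι ℂ BGen.y)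
  | yz : BRel q
      (q • (FreeAlgebra.ι ℂ BGen.y * FreeAlgebra.ι ℂ BGen.z) -
        q⁻¹ • (FreeAlgebra.ι ℂ BGen.z * FreeAlgebra.ι ℂ BGen.y))
      ((q ^ 2 - q ^ (-2 : ℤ)) • FreeAlgebra.ι ℂ BGen.x)

/-- The algebra `B'_q`. -/
abbrev Bq (q : ℂ) : Type := RingQuot (BRel q)

/-- The generator `x` of `B'_q`. -/
def xg (q : ℂ) : Bq q := RingQuot.mkAlgHom ℂ (BRel q) (FreeAlgebra.ι ℂ BGen.x)
/-- The generator `y` of `B'_q`. -/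
def yg (q : ℂ) : Bq q := RingQuot.mkAlgHom ℂ (BRel q) (FreeAlgebra.ι ℂ BGen.y)
/-- The generator `z` of `B'_q`. -/
def zg (q : ℂ) : Bq q := RingQuot.mkAlgHom ℂ (BRel q) (FreeAlgebra.ι ℂ BGen.z)

/-- The element `w = q²x² + q⁻²y² + q²z² - q·x·y·z` of `B'_q`. -/
def wEl (q : ℂ) : Bq q :=
  (q ^ 2) • (xg q * xg q) + (q ^ (-2 : ℤ)) • (yg q * yg q) +
    (q ^ 2) • (zg q * zg q) - q • (xg q * yg q * zg q)

/-! In any algebra where `x, y, z` satisfy the three relations, these let one rewrite `y x`, `z x`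
and `z y` as multiples of the ordered words `x y`, `x z`, `y z` plus a generator. Bringing both
`w a` and `a w` into this normal order shows that they agree for `a ∈ {x, y, z}`, and an element
commuting with a generating set is central. -/

section QRelations

variable {K A : Type*} [Field K] [Ring A] [Algebra K A]

/-- The `q`-commutator `[a,b]_q`. -/
def qComm (q : K) (a b : A) : A := q • (a * b) - q⁻¹ • (b * a)

theorem swap_mul_eq_of_qComm_eq {q : K} {a b c : A} (hq : q ≠ 0) (h : qComm q a b = c) :
    b * a = q ^ 2 • (a * b) - q • c := by
  rw [← h, qComm, smul_sub, smul_smul, smul_smul, mul_inv_cancel₀ hq, one_smul, sq,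
    sub_sub_cancel]

theorem mul_eq_of_qComm_eq {q : K} {a b c : A} (hq : q ≠ 0) (h : qComm q a b = c) :
    a * b = q⁻¹ ^ 2 • (b * a) + q⁻¹ • c := by
  rw [← h, qComm, smul_sub, smul_smul, smul_smul, inv_mul_cancel₀ hq, one_smul, sq,
    add_sub_cancel]

theorem mul_mul_eq_of_mul_eq {a b c d : A} (h : a * b = c) : a * (b * d) = c * d := by
  rw [← mul_assoc, h]

structure SatisfiesBRel (q : K) (x y z : A) : Prop where
  xy : qComm q x y = (q ^ 2 - q ^ (-2 : ℤ)) • z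
  zx : qComm q z x = (q ^ 2 - q ^ (-2 : ℤ)) • y
  yz : qComm q y z = (q ^ 2 - q ^ (-2 : ℤ)) • x

def casimir (q : K) (x y z : A) : A :=
  (q ^ 2) • (x * x) + (q ^ (-2 : ℤ)) • (y * y) + (q ^ 2) • (z * z) - q • (x * y * z)

theorem SatisfiesBRel.commute_casimir {q : K} {x y z : A} (h : SatisfiesBRel q x y z)
    (hq : q ≠ 0) :
    Commute (casimir q x y z) x ∧ Commute (casimir q x y z) y ∧
      Commute (casimir q x y z) z := by
  have yx := swap_mul_eq_of_qComm_eq hq h.xy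
  have zx := mul_eq_of_qComm_eq hq h.zx
  have zy := swap_mul_eq_of_qComm_eq hq h.yz
  have yx_mul := fun c : A => mul_mul_eq_of_mul_eq (d := c) yx
  have zx_mul := fun c : A => mul_mul_eq_of_mul_eq (d := c) zx
  have zy_mul := fun c : A => mul_mul_eq_of_mul_eq (d := c) zy
  refine ⟨?_, ?_, ?_⟩ <;>
  · simp only [Commute, SemiconjBy, casimir, sub_mul, add_mul, mul_sub, mul_add, smul_mul_assoc,
      mul_smul_comm, mul_assoc, yx, yx_mul, zx, zx_mul, zy, zy_mul, smul_sub, smul_add, smul_smul,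
      zpow_neg, zpow_ofNat]
    match_scalars <;> field_simp <;> ring

end QRelations

theorem FreeAlgebra.commute_of_surjective {R X A : Type*} [CommSemiring R] [Semiring A]
    [Algebra R A] {f : FreeAlgebra R X →ₐ[R] A} (hf : Function.Surjective f) {w : A}
    (h : ∀ i, Commute w (f (FreeAlgebra.ι R i))) (b : A) : Commute w b := by
  obtain ⟨a, rfl⟩ := hf b
  induction a using FreeAlgebra.induction with
  | grade0 r => simpa only [AlgHom.commutes] using Algebra.commute_algebraMap_right r w
  | grade1 i => exact h i
  | mul a₁ a₂ h₁ h₂ => simpa only [map_mul] using h₁.mul_right h₂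
  | add a₁ a₂ h₁ h₂ => simpa only [map_add] using h₁.add_right h₂

theorem Bq.satisfiesBRel (q : ℂ) : SatisfiesBRel q (xg q) (yg q) (zg q) where
  xy := by simpa [qComm, xg, yg, zg] using RingQuot.mkAlgHom_rel ℂ (BRel.xy (q := q))
  zx := by simpa [qComm, xg, yg, zg] using RingQuot.mkAlgHom_rel ℂ (BRel.zx (q := q))
  yz := by simpa [qComm, xg, yg, zg] using RingQuot.mkAlgHom_rel ℂ (BRel.yz (q := q))

/-- The element `w = q²x² + q⁻²y² + q²z² - q·x·y·z` is central in `B'_q`. -/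
theorem wEl_central (q : ℂ) (hq : q ≠ 0) (b : Bq q) : wEl q * b = b * wEl q := by
  obtain ⟨hx, hy, hz⟩ := (Bq.satisfiesBRel q).commute_casimir hq
  refine FreeAlgebra.commute_of_surjective (RingQuot.mkAlgHom_surjective ℂ (BRel q)) ?_ b
  rintro (_ | _ | _)
  exacts [hx, hy, hz]
end
end

section
/- In H_{q,t} (with t² ≠ −1), the idempotent e commutes with each of the three elements X + X⁻¹, Y + Y⁻¹, and X·Y·T⁻² + X⁻¹·Y⁻¹; consequently (X + X⁻¹)·e, (Y + Y⁻¹)·e, and (X·Y·T⁻² + X⁻¹·Y⁻¹)·e all lie in the spherical subalgebra SH_{q,t} = e·H_{q,t}·e. -/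
noncomputable section

/-- Generators of the double affine Hecke algebra of type `A₁`. -/
inductive DGen : Type
  | X | Xi | Y | Yi | T

/-- The defining relations of the double affine Hecke algebra `H_{q,t}` of type `A₁`. -/
inductive DahaRel (q t : ℂ) : FreeAlgebra ℂ DGen → FreeAlgebra ℂ DGen → Prop
  | XXi : DahaRel q t (FreeAlgebra.ι ℂ DGen.X * FreeAlgebra.ι ℂ DGen.Xi) 1
  | XiX : DahaRel q t (FreeAlgebra.ι ℂ DGen.Xi * FreeAlgebra.ι ℂ DGen.X) 1
  | YYi : DahaRel q t (FreeAlgebra.ι ℂ DGen.Y * FreeAlgebra.ι ℂ DGen.Yi) 1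
  | YiY : DahaRel q t (FreeAlgebra.ι ℂ DGen.Yi * FreeAlgebra.ι ℂ DGen.Y) 1
  | TXT : DahaRel q t
      (FreeAlgebra.ι ℂ DGen.T * FreeAlgebra.ι ℂ DGen.X * FreeAlgebra.ι ℂ DGen.T)
      (FreeAlgebra.ι ℂ DGen.Xi)
  | TYiT : DahaRel q t
      (FreeAlgebra.ι ℂ DGen.T * FreeAlgebra.ι ℂ DGen.Yi * FreeAlgebra.ι ℂ DGen.T)
      (FreeAlgebra.ι ℂ DGen.Y)
  | XY : DahaRel q t (FreeAlgebra.ι ℂ DGen.X * FreeAlgebra.ι ℂ DGen.Y)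
      ((q ^ 2) • (FreeAlgebra.ι ℂ DGen.Y * FreeAlgebra.ι ℂ DGen.X *
        FreeAlgebra.ι ℂ DGen.T * FreeAlgebra.ι ℂ DGen.T))
  | hecke : DahaRel q t
      ((FreeAlgebra.ι ℂ DGen.T - algebraMap ℂ (FreeAlgebra ℂ DGen) t) *
        (FreeAlgebra.ι ℂ DGen.T + algebraMap ℂ (FreeAlgebra ℂ DGen) t⁻¹)) 0

/-- The double affine Hecke algebra `H_{q,t}` of type `A₁`. -/
abbrev DAHA (q t : ℂ) : Type := RingQuot (DahaRel q t)

/-- The generator `X` of `H_{q,t}`. -/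
def Xg (q t : ℂ) : DAHA q t := RingQuot.mkAlgHom ℂ (DahaRel q t) (FreeAlgebra.ι ℂ DGen.X)
/-- The generator `X⁻¹` of `H_{q,t}`. -/
def Xig (q t : ℂ) : DAHA q t := RingQuot.mkAlgHom ℂ (DahaRel q t) (FreeAlgebra.ι ℂ DGen.Xi)
/-- The generator `Y` of `H_{q,t}`. -/
def Yg (q t : ℂ) : DAHA q t := RingQuot.mkAlgHom ℂ (DahaRel q t) (FreeAlgebra.ι ℂ DGen.Y)
/-- The generator `Y⁻¹` of `H_{q,t}`. -/
def Yig (q t : ℂ) : DAHA q t := RingQuot.mkAlgHom ℂ (DahaRel q t) (FreeAlgebra.ι ℂ DGen.Yi)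
/-- The generator `T` of `H_{q,t}`. -/
def Tg (q t : ℂ) : DAHA q t := RingQuot.mkAlgHom ℂ (DahaRel q t) (FreeAlgebra.ι ℂ DGen.T)
/-- The idempotent `e = (T + t⁻¹)/(t + t⁻¹)` of `H_{q,t}`. -/
def idem (q t : ℂ) : DAHA q t :=
  (t + t⁻¹)⁻¹ • (Tg q t + algebraMap ℂ (DAHA q t) t⁻¹)

/-- The element `T⁻¹ = T + t⁻¹ - t` of `H_{q,t}`. -/
def Tinv (q t : ℂ) : DAHA q t :=
  Tg q t + algebraMap ℂ (DAHA q t) t⁻¹ - algebraMap ℂ (DAHA q t) t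

/-! If `T² = c T + 1`, then `T` commutes with every element of the form `x + T x T`, and so does
`e`, being a polynomial in `T`. The three elements have this form, because `TXT = X⁻¹`,
`TY⁻¹T = Y` and `T (X Y T⁻²) T = T X Y T⁻¹ = (TXT)(T⁻¹YT⁻¹) = X⁻¹Y⁻¹`. Finally, for `z`
commuting with the idempotent `e`, `z e = z e e = e z e`. -/

theorem commute_add_mul_mul_self {R A : Type*} [CommSemiring R] [Semiring A] [Algebra R A]
    {T : A} {c : R} (hT : T * T = c • T + 1) (x : A) : Commute T (x + T * x * T) := by
  calc T * (x + T * x * T) = T * x + (T * T) * x * T := by simp only [mul_add, mul_assoc]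
    _ = T * x + c • (T * x * T) + x * T := by
        rw [hT, add_mul, add_mul, one_mul, smul_mul_assoc, smul_mul_assoc, add_assoc]
    _ = x * T + T * x * (T * T) := by
        rw [hT, mul_add, mul_one, mul_smul_comm]; abel
    _ = (x + T * x * T) * T := by simp only [add_mul, mul_assoc]

theorem isIdempotentElem_inv_smul_add {K A : Type*} [Field K] [Ring A] [Algebra K A]
    {T : A} {a b : K} (h : (T - algebraMap K A a) * (T + algebraMap K A b) = 0)
    (hab : a + b ≠ 0) : IsIdempotentElem ((a + b)⁻¹ • (T + algebraMap K A b)) := by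
  have hsq : (T + algebraMap K A b) * (T + algebraMap K A b) =
      (a + b) • (T + algebraMap K A b) := by
    calc (T + algebraMap K A b) * (T + algebraMap K A b)
        = (T - algebraMap K A a) * (T + algebraMap K A b)
          + algebraMap K A (a + b) * (T + algebraMap K A b) := by
          rw [map_add]; noncomm_ring
      _ = (a + b) • (T + algebraMap K A b) := by rw [h, zero_add, Algebra.smul_def]
  rw [IsIdempotentElem, smul_mul_smul_comm, hsq, smul_smul, mul_assoc, inv_mul_cancel₀ hab,
    mul_one]

theorem IsIdempotentElem.mul_eq_mul_mul_of_commute {M : Type*} [Semigroup M] {e z : M}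
    (he : IsIdempotentElem e) (hz : Commute e z) : z * e = e * z * e := by
  rw [hz.eq, mul_assoc, he.eq]

namespace DAHA

variable (q t : ℂ)

theorem Tg_mul_Xg_mul_Tg : Tg q t * Xg q t * Tg q t = Xig q t := by
  simpa [Tg, Xg, Xig] using RingQuot.mkAlgHom_rel ℂ (DahaRel.TXT (q := q) (t := t))

theorem Tg_mul_Yig_mul_Tg : Tg q t * Yig q t * Tg q t = Yg q t := by
  simpa [Tg, Yg, Yig] using RingQuot.mkAlgHom_rel ℂ (DahaRel.TYiT (q := q) (t := t))

theorem Tg_sub_mul_Tg_add :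
    (Tg q t - algebraMap ℂ (DAHA q t) t) * (Tg q t + algebraMap ℂ (DAHA q t) t⁻¹) = 0 := by
  simpa [Tg] using RingQuot.mkAlgHom_rel ℂ (DahaRel.hecke (q := q) (t := t))

variable {t}

theorem Tg_mul_Tg (ht : t ≠ 0) : Tg q t * Tg q t = (t - t⁻¹) • Tg q t + 1 := by
  have h := Tg_sub_mul_Tg_add q t
  simp only [Algebra.algebraMap_eq_smul_one, sub_mul, mul_add, smul_mul_assoc, mul_smul_comm,
    one_mul, mul_one, smul_sub, smul_smul, inv_mul_cancel₀ ht] at h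
  rw [← sub_eq_zero, ← h]
  module

theorem Tg_mul_Tinv (ht : t ≠ 0) : Tg q t * Tinv q t = 1 := by
  rw [Tinv, add_sub_assoc, mul_add, Tg_mul_Tg q ht, ← map_sub, ← Algebra.commutes,
    ← Algebra.smul_def]
  module

theorem Tinv_mul_Tg (ht : t ≠ 0) : Tinv q t * Tg q t = 1 := by
  rw [Tinv, add_sub_assoc, add_mul, Tg_mul_Tg q ht, ← map_sub, ← Algebra.smul_def]
  module

theorem Tinv_mul_Yg_mul_Tinv (ht : t ≠ 0) : Tinv q t * Yg q t * Tinv q t = Yig q t := by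
  calc Tinv q t * Yg q t * Tinv q t
      = Tinv q t * (Tg q t * Yig q t * Tg q t) * Tinv q t := by rw [Tg_mul_Yig_mul_Tg]
    _ = (Tinv q t * Tg q t) * Yig q t * (Tg q t * Tinv q t) := by simp only [mul_assoc]
    _ = Yig q t := by rw [Tinv_mul_Tg q ht, Tg_mul_Tinv q ht, one_mul, mul_one]

theorem Tg_mul_mul_Tinv_mul_Tinv_mul_Tg (ht : t ≠ 0) :
    Tg q t * (Xg q t * Yg q t * (Tinv q t * Tinv q t)) * Tg q t = Xig q t * Yig q t := by
  calc Tg q t * (Xg q t * Yg q t * (Tinv q t * Tinv q t)) * Tg q t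
      = Tg q t * Xg q t * Yg q t * Tinv q t * (Tinv q t * Tg q t) := by simp only [mul_assoc]
    _ = Tg q t * Xg q t * (Tg q t * Tinv q t) * Yg q t * Tinv q t := by
        rw [Tinv_mul_Tg q ht, Tg_mul_Tinv q ht, mul_one, mul_one]
    _ = (Tg q t * Xg q t * Tg q t) * (Tinv q t * Yg q t * Tinv q t) := by simp only [mul_assoc]
    _ = Xig q t * Yig q t := by rw [Tg_mul_Xg_mul_Tg, Tinv_mul_Yg_mul_Tinv q ht]

theorem commute_idem_add_Tg_mul_mul_Tg (ht : t ≠ 0) (x : DAHA q t) :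
    Commute (idem q t) (x + Tg q t * x * Tg q t) :=
  ((commute_add_mul_mul_self (Tg_mul_Tg q ht) x).add_left
    (Algebra.commute_algebraMap_left _ _)).smul_left _

theorem isIdempotentElem_idem (ht : t ≠ 0) (ht2 : t ^ 2 ≠ -1) :
    IsIdempotentElem (idem q t) := by
  refine isIdempotentElem_inv_smul_add (Tg_sub_mul_Tg_add q t) fun h => ht2 ?_
  field_simp at h
  linear_combination h

end DAHA

theorem idem_commutes_general (q t : ℂ) (ht : t ≠ 0) (ht2 : t ^ 2 ≠ -1) :
    (idem q t * (Xg q t + Xig q t) = (Xg q t + Xig q t) * idem q t) ∧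
    (idem q t * (Yg q t + Yig q t) = (Yg q t + Yig q t) * idem q t) ∧
    (idem q t * (Xg q t * Yg q t * (Tinv q t * Tinv q t) + Xig q t * Yig q t) =
      (Xg q t * Yg q t * (Tinv q t * Tinv q t) + Xig q t * Yig q t) * idem q t) ∧
    (∃ h : DAHA q t, (Xg q t + Xig q t) * idem q t = idem q t * h * idem q t) ∧
    (∃ h : DAHA q t, (Yg q t + Yig q t) * idem q t = idem q t * h * idem q t) ∧
    (∃ h : DAHA q t,
      (Xg q t * Yg q t * (Tinv q t * Tinv q t) + Xig q t * Yig q t) * idem q t =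
        idem q t * h * idem q t) := by
  have hX : Commute (idem q t) (Xg q t + Xig q t) := by
    simpa only [DAHA.Tg_mul_Xg_mul_Tg] using DAHA.commute_idem_add_Tg_mul_mul_Tg q ht (Xg q t)
  have hY : Commute (idem q t) (Yg q t + Yig q t) := by
    simpa only [DAHA.Tg_mul_Yig_mul_Tg, add_comm] using
      DAHA.commute_idem_add_Tg_mul_mul_Tg q ht (Yig q t)
  have hZ : Commute (idem q t)
      (Xg q t * Yg q t * (Tinv q t * Tinv q t) + Xig q t * Yig q t) := by
    simpa only [DAHA.Tg_mul_mul_Tinv_mul_Tinv_mul_Tg q ht] using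
      DAHA.commute_idem_add_Tg_mul_mul_Tg q ht (Xg q t * Yg q t * (Tinv q t * Tinv q t))
  have he := DAHA.isIdempotentElem_idem q ht ht2
  exact ⟨hX.eq, hY.eq, hZ.eq, ⟨_, he.mul_eq_mul_mul_of_commute hX⟩,
    ⟨_, he.mul_eq_mul_mul_of_commute hY⟩, ⟨_, he.mul_eq_mul_mul_of_commute hZ⟩⟩

/-- The idempotent `e` commutes with `X + X⁻¹`, `Y + Y⁻¹` and `X·Y·T⁻² + X⁻¹·Y⁻¹`, and
consequently `(X + X⁻¹)e`, `(Y + Y⁻¹)e`, `(X·Y·T⁻² + X⁻¹·Y⁻¹)e` lie in the spherical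
subalgebra `SH_{q,t} = e·H_{q,t}·e`. -/
theorem idem_commutes (q t : ℂ) (hq : q ≠ 0) (ht : t ≠ 0) (ht2 : t ^ 2 ≠ -1) :
    (idem q t * (Xg q t + Xig q t) = (Xg q t + Xig q t) * idem q t) ∧
    (idem q t * (Yg q t + Yig q t) = (Yg q t + Yig q t) * idem q t) ∧
    (idem q t * (Xg q t * Yg q t * (Tinv q t * Tinv q t) + Xig q t * Yig q t) =
      (Xg q t * Yg q t * (Tinv q t * Tinv q t) + Xig q t * Yig q t) * idem q t) ∧
    (∃ h : DAHA q t, (Xg q t + Xig q t) * idem q t = idem q t * h * idem q t) ∧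
    (∃ h : DAHA q t, (Yg q t + Yig q t) * idem q t = idem q t * h * idem q t) ∧
    (∃ h : DAHA q t,
      (Xg q t * Yg q t * (Tinv q t * Tinv q t) + Xig q t * Yig q t) * idem q t =
        idem q t * h * idem q t) :=
  idem_commutes_general q t ht ht2
end
end

section
/- The operators x̂, T̂, Ŷ on ℂ[X^{±1}] are invertible and satisfy the defining relations of H_{q,t}: T̂∘x̂∘T̂ = x̂⁻¹, T̂∘Ŷ⁻¹∘T̂ = Ŷ, x̂∘Ŷ = q²·Ŷ∘x̂∘T̂², and (T̂ − t)∘(T̂ + t⁻¹) = 0. Consequently there is a unique ℂ-algebra homomorphism π : H_{q,t} → End_ℂ(ℂ[X^{±1}]) with π(X) = x̂, π(T) = T̂, π(Y) = Ŷ (the polynomial representation of H_{q,t}). -/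
noncomputable section

/-!
Write `T̂ = t ŝ + (t - t⁻¹) D` with the divided difference `D = (X² - 1)⁻¹ (ŝ - 1)`. Then
`ŝ D = X² D`, `x̂ ŝ x̂ = ŝ` and `x̂ D x̂ = D - 1`; these give the quadratic relation and
`x̂ T̂ x̂ = T̂ - (t - t⁻¹) = T̂⁻¹`, i.e. `T̂ x̂ T̂ = x̂⁻¹`. Each such identity is checked after
multiplying by `X² - 1`, which is not a zero divisor. The operator `ŷ ŝ` is an involution with
`x̂ (ŷ ŝ) = q² (ŷ ŝ) x̂⁻¹`, so `Ŷ⁻¹ = T̂⁻¹ ŷ ŝ`, and the remaining relations follow formally.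
The representation is the universal property of `H_{q,t}`; it is unique because the images of
`X⁻¹` and `Y⁻¹` are forced to be the inverses of those of `X` and `Y`.
-/

namespace LaurentPolynomial

theorem T_sub_one_ne_zero {R : Type*} [Ring R] [Nontrivial R] {n : ℤ} (hn : n ≠ 0) :
    (T n - 1 : R[T;T⁻¹]) ≠ 0 := by
  rw [sub_ne_zero, ← T_zero]
  exact fun h => hn (AddMonoidAlgebra.single_left_injective one_ne_zero h)

section Basis

variable {R : Type*} [CommSemiring R]

theorem linearMap_ext_T {M : Type*} [AddCommMonoid M] [Module R M] {φ ψ : R[T;T⁻¹] →ₗ[R] M}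
    (h : ∀ n, φ (T n) = ψ (T n)) : φ = ψ :=
  AddMonoidAlgebra.lhom_ext' fun n => LinearMap.ext_ring (h n)

theorem eq_invert_of_apply_T {s : Module.End R R[T;T⁻¹]} (hs : ∀ n, s (T n) = T (-n)) :
    s = invert.toLinearMap :=
  linearMap_ext_T fun n => by simp [hs]

end Basis

variable {K : Type*} [Field K]

/-- `Th = t • invert + (t - t⁻¹) • (T 2 - 1)⁻¹ • (invert - 1)`, with the denominator cleared. -/
def IsDemazureLusztig (t : K) (Th : Module.End K K[T;T⁻¹]) : Prop :=
  ∀ f, (T 2 - 1) * Th f = t • ((T 2 - 1) * invert f) + (t - t⁻¹) • (invert f - f)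

section DemazureLusztig

variable {t : K} {Th : Module.End K K[T;T⁻¹]}

theorem cancel_T_two_sub_one {a b : K[T;T⁻¹]} (h : (T 2 - 1) * a = (T 2 - 1) * b) : a = b :=
  mul_left_cancel₀ (T_sub_one_ne_zero two_ne_zero) h

-- This is `ŝ D = X² D`.
theorem IsDemazureLusztig.invert_apply (hT : IsDemazureLusztig t Th) (f : K[T;T⁻¹]) :
    invert (Th f) = t • f + T 2 * (Th f - t • invert f) := by
  apply cancel_T_two_sub_one
  have h := congrArg invert (hT f)
  simp only [map_add, map_mul, map_smul, map_sub, map_one, invert_T, involutive_invert f] at h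
  have hTT : (T 2 : K[T;T⁻¹]) * T (-2) = 1 := by rw [← T_add]; norm_num
  have hf := hT f
  simp only [Algebra.smul_def] at h hf ⊢
  linear_combination (-T 2) * h - T 2 * hf + (invert (Th f) - algebraMap K _ t * f) * hTT

theorem IsDemazureLusztig.apply_apply (hT : IsDemazureLusztig t Th) (ht : t ≠ 0)
    (f : K[T;T⁻¹]) : Th (Th f) = (t - t⁻¹) • Th f + f := by
  apply cancel_T_two_sub_one
  have hct : algebraMap K K[T;T⁻¹] (t - t⁻¹) * algebraMap K _ t = algebraMap K _ t ^ 2 - 1 := by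
    rw [← map_mul, ← map_pow, ← map_one (algebraMap K _), ← map_sub]
    congr 1
    field_simp
  have hf := hT f
  have hg := hT (Th f)
  rw [hT.invert_apply] at hg
  simp only [Algebra.smul_def] at hf hg ⊢
  linear_combination hg + algebraMap K _ t * T 2 * hf - (T 2 - 1) * f * hct

theorem IsDemazureLusztig.T_one_mul_apply_T_one_mul (hT : IsDemazureLusztig t Th)
    (f : K[T;T⁻¹]) : T 1 * Th (T 1 * f) = Th f - (t - t⁻¹) • f := by
  apply cancel_T_two_sub_one
  have h11 : (T 1 : K[T;T⁻¹]) * T (-1) = 1 := by rw [← T_add]; norm_num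
  have h2 : (T 2 : K[T;T⁻¹]) = T 1 * T 1 := by rw [← T_add]; norm_num
  have hf := hT f
  have hg := hT (T 1 * f)
  simp only [map_mul, invert_T] at hg
  simp only [Algebra.smul_def, h2] at hf hg ⊢
  linear_combination T 1 * hg - hf
    + (algebraMap K _ (t - t⁻¹) + (T 1 * T 1 - 1) * algebraMap K _ t) * invert f * h11

theorem IsDemazureLusztig.quadratic_relation (hT : IsDemazureLusztig t Th) (ht : t ≠ 0) :
    (Th - t • 1) * (Th + t⁻¹ • 1) = 0 := by
  refine LinearMap.ext fun f => ?_
  simp only [Module.End.mul_apply, LinearMap.sub_apply, LinearMap.add_apply,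
    LinearMap.smul_apply, Module.End.one_apply, LinearMap.zero_apply, map_add, map_smul,
    hT.apply_apply ht, smul_sub, smul_smul, inv_mul_cancel₀ ht, one_smul, sub_smul]
  abel

theorem IsDemazureLusztig.mul_sub_smul_one (hT : IsDemazureLusztig t Th) (ht : t ≠ 0) :
    Th * (Th - (t - t⁻¹) • 1) = 1 :=
  LinearMap.ext fun f => by simp [hT.apply_apply ht]

theorem IsDemazureLusztig.sub_smul_one_mul (hT : IsDemazureLusztig t Th) (ht : t ≠ 0) :
    (Th - (t - t⁻¹) • 1) * Th = 1 :=
  LinearMap.ext fun f => by simp [hT.apply_apply ht]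

theorem IsDemazureLusztig.mulLeft_T_one_mul_mul_mulLeft_T_one (hT : IsDemazureLusztig t Th) :
    LinearMap.mulLeft K (T 1) * Th * LinearMap.mulLeft K (T 1) = Th - (t - t⁻¹) • 1 :=
  LinearMap.ext hT.T_one_mul_apply_T_one_mul

end DemazureLusztig

section Scaling

variable {q : K} {y : Module.End K K[T;T⁻¹]}

theorem mul_invert_mul_self (hq : q ≠ 0) (hy : ∀ n : ℤ, y (T n) = q ^ (-2 * n) • T n) :
    y * invert.toLinearMap * (y * invert.toLinearMap) = 1 :=
  linearMap_ext_T fun n => by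
    simp [hy, smul_smul, mul_inv_cancel₀ (zpow_ne_zero _ hq)]

theorem mulLeft_T_one_mul_mul_invert (hq : q ≠ 0) (hy : ∀ n : ℤ, y (T n) = q ^ (-2 * n) • T n) :
    LinearMap.mulLeft K (T 1) * (y * invert.toLinearMap)
      = q ^ 2 • (y * invert.toLinearMap * LinearMap.mulLeft K (T (-1))) :=
  linearMap_ext_T fun n => by
    simp only [Module.End.mul_apply, LinearMap.smul_apply, LinearMap.mulLeft_apply,
      AlgEquiv.toLinearMap_apply, ← T_add, invert_T, map_smul, hy, smul_smul]
    rw [show -(-1 + n) = 1 + -n by ring, ← zpow_natCast, ← zpow_add₀ hq]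
    congr 2
    ring

end Scaling

end LaurentPolynomial

section DAHA

variable {q t : ℂ}

theorem Xg_mul_Xig : Xg q t * Xig q t = 1 := by
  have h := RingQuot.mkAlgHom_rel ℂ (DahaRel.XXi (q := q) (t := t))
  rwa [map_mul, map_one] at h

theorem Xig_mul_Xg : Xig q t * Xg q t = 1 := by
  have h := RingQuot.mkAlgHom_rel ℂ (DahaRel.XiX (q := q) (t := t))
  rwa [map_mul, map_one] at h

theorem Yg_mul_Yig : Yg q t * Yig q t = 1 := by
  have h := RingQuot.mkAlgHom_rel ℂ (DahaRel.YYi (q := q) (t := t))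
  rwa [map_mul, map_one] at h

theorem Yig_mul_Yg : Yig q t * Yg q t = 1 := by
  have h := RingQuot.mkAlgHom_rel ℂ (DahaRel.YiY (q := q) (t := t))
  rwa [map_mul, map_one] at h

variable {A : Type*} [Ring A] [Algebra ℂ A]

theorem DAHA.algHom_ext {π₁ π₂ : DAHA q t →ₐ[ℂ] A} (hX : π₁ (Xg q t) = π₂ (Xg q t))
    (hT : π₁ (Tg q t) = π₂ (Tg q t)) (hY : π₁ (Yg q t) = π₂ (Yg q t)) : π₁ = π₂ := by
  have hXi : π₁ (Xig q t) = π₂ (Xig q t) :=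
    left_inv_eq_right_inv (a := π₁ (Xg q t)) (by rw [← map_mul, Xig_mul_Xg, map_one])
      (by rw [hX, ← map_mul, Xg_mul_Xig, map_one])
  have hYi : π₁ (Yig q t) = π₂ (Yig q t) :=
    left_inv_eq_right_inv (a := π₁ (Yg q t)) (by rw [← map_mul, Yig_mul_Yg, map_one])
      (by rw [hY, ← map_mul, Yg_mul_Yig, map_one])
  refine RingQuot.ringQuot_ext' _ _ _ (FreeAlgebra.hom_ext (funext fun g => ?_))
  cases g
  exacts [hX, hXi, hY, hYi, hT]

theorem DAHA.existsUnique_algHom {x xi y yi τ : A} (hxxi : x * xi = 1) (hxix : xi * x = 1)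
    (hyyi : y * yi = 1) (hyiy : yi * y = 1) (hτxτ : τ * x * τ = xi) (hτyiτ : τ * yi * τ = y)
    (hxy : x * y = q ^ 2 • (y * x * τ * τ)) (hτ : (τ - t • 1) * (τ + t⁻¹ • 1) = 0) :
    ∃! π : DAHA q t →ₐ[ℂ] A, π (Xg q t) = x ∧ π (Tg q t) = τ ∧ π (Yg q t) = y := by
  let gen : DGen → A := fun
    | .X => x | .Xi => xi | .Y => y | .Yi => yi | .T => τ
  have hφ : ∀ ⦃a b⦄, DahaRel q t a b → FreeAlgebra.lift ℂ gen a = FreeAlgebra.lift ℂ gen b := by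
    intro a b r
    cases r <;> simp [gen, Algebra.algebraMap_eq_smul_one, *]
  let π₀ := RingQuot.liftAlgHom ℂ ⟨FreeAlgebra.lift ℂ gen, hφ⟩
  have hπ₀ (g : DGen) : π₀ (RingQuot.mkAlgHom ℂ (DahaRel q t) (FreeAlgebra.ι ℂ g)) = gen g :=
    (RingQuot.liftAlgHom_mkAlgHom_apply ℂ _ hφ _).trans (FreeAlgebra.lift_ι_apply _ _)
  refine ⟨π₀, ⟨hπ₀ .X, hπ₀ .T, hπ₀ .Y⟩, fun π ⟨hπX, hπT, hπY⟩ => ?_⟩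
  exact DAHA.algHom_ext (hπX.trans (hπ₀ .X).symm) (hπT.trans (hπ₀ .T).symm)
    (hπY.trans (hπ₀ .Y).symm)

end DAHA

open LaurentPolynomial in
/-- The operators `x̂`, `T̂`, `Ŷ = ŷ ∘ ŝ ∘ T̂` on `ℂ[X^{±1}]` are invertible and satisfy the
defining relations of `H_{q,t}`; consequently there is a unique algebra homomorphism
`π : H_{q,t} → End_ℂ(ℂ[X^{±1}])` with `π X = x̂`, `π T = T̂`, `π Y = Ŷ` (the polynomial
representation).  Here `x̂` is multiplication by `X`, `ŝ` is `f(X) ↦ f(X⁻¹)`,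
`ŷ` is `f(X) ↦ f(q⁻²X)`, and `T̂` is the Demazure–Lusztig operator, characterized by
`(X²-1)·T̂f = t·(X²-1)·ŝf + (t-t⁻¹)·(ŝf - f)`. -/
theorem polynomial_representation (q t : ℂ) (hq : q ≠ 0) (ht : t ≠ 0)
    (xh sh yh Th : Module.End ℂ (LaurentPolynomial ℂ))
    (hx : ∀ f, xh f = T 1 * f)
    (hs : ∀ n : ℤ, sh (T n) = T (-n))
    (hy : ∀ n : ℤ, yh (T n) = q ^ (-2 * n) • T n)
    (hT : ∀ f, (T 2 - 1) * Th f = t • ((T 2 - 1) * sh f) + (t - t⁻¹) • (sh f - f)) :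
    (IsUnit xh ∧ IsUnit Th ∧ IsUnit (yh * sh * Th)) ∧
    (Th * xh * Th) * xh = 1 ∧ xh * (Th * xh * Th) = 1 ∧
    (∃ Yinv : Module.End ℂ (LaurentPolynomial ℂ),
      (yh * sh * Th) * Yinv = 1 ∧ Yinv * (yh * sh * Th) = 1 ∧
      Th * Yinv * Th = yh * sh * Th) ∧
    xh * (yh * sh * Th) = (q ^ 2) • ((yh * sh * Th) * xh * Th * Th) ∧
    (Th - t • 1) * (Th + t⁻¹ • 1) = 0 ∧
    ∃! π : DAHA q t →ₐ[ℂ] Module.End ℂ (LaurentPolynomial ℂ),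
      π (Xg q t) = xh ∧ π (Tg q t) = Th ∧ π (Yg q t) = yh * sh * Th := by
  obtain rfl : xh = LinearMap.mulLeft ℂ (T 1) := LinearMap.ext hx
  obtain rfl : sh = invert.toLinearMap := eq_invert_of_apply_T hs
  have hDL : IsDemazureLusztig t Th := hT
  set X := LinearMap.mulLeft ℂ (T 1 : ℂ[T;T⁻¹])
  set Xi := LinearMap.mulLeft ℂ (T (-1) : ℂ[T;T⁻¹])
  set ω := yh * invert.toLinearMap
  set Ti := Th - (t - t⁻¹) • 1
  have hXXi : X * Xi = 1 := LinearMap.ext fun f => by simp [X, Xi, ← mul_assoc]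
  have hXiX : Xi * X = 1 := LinearMap.ext fun f => by simp [X, Xi, ← mul_assoc]
  have hTTi : Th * Ti = 1 := hDL.mul_sub_smul_one ht
  have hTiT : Ti * Th = 1 := hDL.sub_smul_one_mul ht
  have hωω : ω * ω = 1 := mul_invert_mul_self hq hy
  have hXω : X * ω = q ^ 2 • (ω * Xi) := mulLeft_T_one_mul_mul_invert hq hy
  have hTXT : Th * X * Th = Xi := by
    refine (left_inv_eq_right_inv hXiX ?_).symm
    rw [← mul_assoc, ← mul_assoc, hDL.mulLeft_T_one_mul_mul_mulLeft_T_one, hTiT]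
  have hYYi : ω * Th * (Ti * ω) = 1 := by rw [mul_assoc, ← mul_assoc Th, hTTi, one_mul, hωω]
  have hYiY : Ti * ω * (ω * Th) = 1 := by rw [mul_assoc, ← mul_assoc ω, hωω, one_mul, hTiT]
  have hTYiT : Th * (Ti * ω) * Th = ω * Th := by rw [← mul_assoc, hTTi, one_mul]
  have hXY : X * (ω * Th) = q ^ 2 • (ω * Th * X * Th * Th) := by
    rw [← mul_assoc, hXω, smul_mul_assoc, ← hTXT]
    simp only [mul_assoc]
  refine ⟨⟨⟨⟨X, Xi, hXXi, hXiX⟩, rfl⟩, ⟨⟨Th, Ti, hTTi, hTiT⟩, rfl⟩, ⟨⟨_, _, hYYi, hYiY⟩, rfl⟩⟩,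
    by rw [hTXT, hXiX], by rw [hTXT, hXXi], ⟨_, hYYi, hYiY, hTYiT⟩, hXY, hDL.quadratic_relation ht,
    DAHA.existsUnique_algHom hXXi hXiX hYYi hYiY hTXT hTYiT hXY (hDL.quadratic_relation ht)⟩
end
end

section
/- Assume the complex numbers t·q^{2n} + t⁻¹·q^{−2n}, for n ≥ 0, are pairwise distinct. Then there exists a unique family (p_n)_{n≥0} of symmetric Laurent polynomials in ℂ[X^{±1}] such that: (a) L_{q,t}(p_n) = (t·q^{2n} + t⁻¹·q^{−2n})·p_n for every n ≥ 0, and (b) p_0 = 1 and, for each n ≥ 1, p_n = Xⁿ + X⁻ⁿ plus a ℂ-linear combination of the elements X^m + X^{−m} with 0 ≤ m < n (these are the Macdonald polynomials of type A_1). -/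
/-!
On the coefficients `f_k` of a Laurent polynomial `f`, the operator `L_{q,t}` multiplied by
`X⁻¹ - X` acts by `f ↦ (λ_{-(k+1)} f_{k+1} - λ_{k-1} f_{k-1})_k`, where
`λ_k = t q^{2k} + t⁻¹ q^{-2k}`. For a symmetric `f` the eigenvalue equation `L f = λ_n f` thus
becomes the two-step recurrence `(λ_j - λ_n) f_j = (λ_{-(j+2)} - λ_n) f_{j+2}` for `j ≥ 0`.
Starting from `f_n = 1` and `f_{n+1} = f_{n+2} = … = 0`, the factors `λ_j - λ_n` with `j < n`
are nonzero, so the recurrence determines `f_{n-1}, f_{n-2}, …, f_0` uniquely.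
-/

noncomputable section

open LaurentPolynomial Finset

namespace LaurentPolynomial

theorem coeff_T_mul {R : Type*} [Semiring R] (n k : ℤ) (f : R[T;T⁻¹]) :
    (T n * f).coeff k = f.coeff (k - n) := by
  rw [T, AddMonoidAlgebra.coeff_single_mul_apply, one_mul, neg_add_eq_sub]

theorem coeff_map_of_map_T {R : Type*} [CommSemiring R] (φ : R[T;T⁻¹] →ₗ[R] R[T;T⁻¹])
    (e : ℤ ≃ ℤ) (w : ℤ → R) (hφ : ∀ n, φ (T n) = w n • T (e n)) (f : R[T;T⁻¹]) (k : ℤ) :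
    (φ f).coeff (e k) = w k * f.coeff k := by
  induction f using LaurentPolynomial.induction_on' with
  | add f g hf hg => simp only [map_add, AddMonoidAlgebra.coeff_add, Finsupp.add_apply, hf, hg,
      mul_add]
  | C_mul_T n a =>
    rw [← smul_eq_C_mul, map_smul, hφ]
    by_cases h : n = k
    · subst h; simp [mul_comm]
    · simp [h, e.injective.ne h]

theorem coeff_neg_of_map_eq_self {R : Type*} [CommSemiring R] {sh : R[T;T⁻¹] →ₗ[R] R[T;T⁻¹]}
    (hs : ∀ n, sh (T n) = T (-n)) {f : R[T;T⁻¹]} (hf : sh f = f) (k : ℤ) :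
    f.coeff (-k) = f.coeff k := by
  simpa [hf] using coeff_map_of_map_T sh (Equiv.neg ℤ) 1 (fun n => by simp [hs]) f k

theorem eq_of_map_eq_self_of_coeff_natCast_eq {R : Type*} [CommSemiring R]
    {sh : R[T;T⁻¹] →ₗ[R] R[T;T⁻¹]} (hs : ∀ n, sh (T n) = T (-n)) {f f' : R[T;T⁻¹]}
    (hf : sh f = f) (hf' : sh f' = f') (h : ∀ j : ℕ, f.coeff j = f'.coeff j) : f = f' := by
  ext k
  obtain ⟨j, rfl | rfl⟩ := Int.eq_nat_or_neg k
  · exact h j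
  · rw [coeff_neg_of_map_eq_self hs hf, coeff_neg_of_map_eq_self hs hf', h]

theorem coeff_sum_smul_T_add_T_neg {R : Type*} [Semiring R] (c : ℕ → R) (N k : ℕ) :
    (∑ m ∈ range N, c m • (T m + T (-m) : R[T;T⁻¹])).coeff k =
      if k < N then (if k = 0 then 2 else 1) * c k else 0 := by
  have hterm : ∀ m : ℕ, (c m • (T m + T (-m) : R[T;T⁻¹])).coeff k =
      if m = k then (if k = 0 then 2 else 1) * c k else 0 := by
    intro m
    by_cases hmk : m = k
    · subst hmk
      rcases eq_or_ne m 0 with rfl | hm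
      · simp [two_mul]
      · simp [hm]
    · simp [hmk, show -(m : ℤ) ≠ k by omega]
  simp only [AddMonoidAlgebra.coeff_sum, Finsupp.coe_finsetSum, Finset.sum_apply, hterm,
    Finset.sum_ite_eq', mem_range]

theorem coeff_T_add_T_neg_add_sum_of_le {R : Type*} [Semiring R] (c : ℕ → R) {n k : ℕ}
    (hn : n ≠ 0) (hk : n ≤ k) :
    (T n + T (-n) + ∑ m ∈ range n, c m • (T m + T (-m)) : R[T;T⁻¹]).coeff k =
      if k = n then 1 else 0 := by
  simp only [AddMonoidAlgebra.coeff_add, Finsupp.add_apply, coeff_sum_smul_T_add_T_neg,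
    if_neg hk.not_gt, add_zero, T_apply]
  simp [eq_comm, hn]

section Symmetric

variable {K : Type*} [Field K]

/-- The coefficient of `X^{±m}` is `g m` for `m ≤ n`; the constant term is halved because
`T 0 + T (-0) = 2`. -/
def symmetricOfCoeff (g : ℕ → K) (n : ℕ) : K[T;T⁻¹] :=
  ∑ m ∈ range (n + 1), (g m / if m = 0 then 2 else 1) • (T m + T (-m))

theorem coeff_symmetricOfCoeff [NeZero (2 : K)] {g : ℕ → K} {n : ℕ}
    (hg : ∀ k, n < k → g k = 0) (k : ℕ) :
    (symmetricOfCoeff g n).coeff k = g k := by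
  rw [symmetricOfCoeff, coeff_sum_smul_T_add_T_neg]
  split_ifs with hk hk0
  · field_simp
  · simp
  · exact (hg k (by omega)).symm

theorem map_symmetricOfCoeff {sh : K[T;T⁻¹] →ₗ[K] K[T;T⁻¹]} (hs : ∀ n, sh (T n) = T (-n))
    (g : ℕ → K) (n : ℕ) : sh (symmetricOfCoeff g n) = symmetricOfCoeff g n := by
  simp only [symmetricOfCoeff, map_sum, map_smul, map_add, hs, neg_neg, add_comm]

theorem symmetricOfCoeff_zero [NeZero (2 : K)] {g : ℕ → K} (hg : g 0 = 1) :
    symmetricOfCoeff g 0 = 1 := by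
  simp only [symmetricOfCoeff, zero_add, sum_range_one, hg, if_true, Nat.cast_zero, neg_zero,
    T_zero, ← two_smul K (1 : K[T;T⁻¹]), smul_smul, one_div, inv_mul_cancel₀ (two_ne_zero' K),
    one_smul]

theorem symmetricOfCoeff_eq {g : ℕ → K} {n : ℕ} (hg : g n = 1) (hn : n ≠ 0) :
    symmetricOfCoeff g n =
      T n + T (-n) + ∑ m ∈ range n, (g m / if m = 0 then 2 else 1) • (T m + T (-m)) := by
  rw [symmetricOfCoeff, sum_range_succ, hg, if_neg hn, div_one, one_smul, add_comm]

end Symmetric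

end LaurentPolynomial

/-- For symmetric `f` the relation at `-k` is the one at `k` read backwards, and the one at `0`
holds trivially. -/
theorem forall_int_recurrence_iff_forall_nat {R : Type*} [CommRing R] (e : ℤ → R) (c : R)
    {f : ℤ → R} (hf : ∀ k, f (-k) = f k) :
    (∀ k : ℤ, (e (-(k + 1)) - c) * f (k + 1) = (e (k - 1) - c) * f (k - 1)) ↔
      ∀ j : ℕ, (e j - c) * f j = (e (-↑(j + 2)) - c) * f ↑(j + 2) := by
  constructor
  · intro h j
    have := h (j + 1)
    rw [show (j : ℤ) + 1 + 1 = ↑(j + 2) by push_cast; ring, add_sub_cancel_right] at this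
    exact this.symm
  · intro h
    have hnat : ∀ j : ℕ, (e (-(j + 1)) - c) * f (j + 1) = (e (j - 1) - c) * f (j - 1) := by
      rintro (_ | j)
      · simp [← hf 1]
      · rw [Nat.cast_add_one, add_sub_cancel_right,
          show (j : ℤ) + 1 + 1 = ↑(j + 2) by push_cast; ring]
        exact (h j).symm
    intro k
    obtain ⟨j, rfl | rfl⟩ := Int.eq_nat_or_neg k
    · exact hnat j
    · rw [show -(j : ℤ) + 1 = -(j - 1) by ring, show -(j : ℤ) - 1 = -(j + 1) by ring, hf, hf,
        neg_neg]
      exact (hnat j).symm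

section DownwardRecurrence

variable {K : Type*} [Field K] (α β : ℕ → K) (n : ℕ)

def downwardRecurrenceSolution (j : ℕ) : K :=
  if j ≤ n then fromTop (n - j) else 0
where
  /-- the value at `n - i` -/
  fromTop : ℕ → K
    | 0 => 1
    | 1 => 0
    | i + 2 => β (n - (i + 2)) * fromTop i / α (n - (i + 2))

theorem downwardRecurrenceSolution_self : downwardRecurrenceSolution α β n n = 1 := by
  simp [downwardRecurrenceSolution, downwardRecurrenceSolution.fromTop]

def IsDownwardSolution (g : ℕ → K) : Prop :=
  g n = 1 ∧ (∀ k, n < k → g k = 0) ∧ ∀ j, α j * g j = β j * g (j + 2)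

theorem isDownwardSolution_downwardRecurrenceSolution (hα : ∀ j < n, α j ≠ 0) (hαn : α n = 0) :
    IsDownwardSolution α β n (downwardRecurrenceSolution α β n) := by
  refine ⟨downwardRecurrenceSolution_self α β n, ?_, fun j => ?_⟩
  · intro k hk
    simp [downwardRecurrenceSolution, hk.not_ge]
  by_cases hj : j + 2 ≤ n
  · obtain ⟨i, rfl⟩ := Nat.exists_eq_add_of_le hj
    simp only [downwardRecurrenceSolution, show j ≤ j + 2 + i by omega, hj, if_true,
      show j + 2 + i - j = i + 2 by omega, show j + 2 + i - (j + 2) = i by omega,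
      downwardRecurrenceSolution.fromTop, show j + 2 + i - (i + 2) = j by omega]
    exact mul_div_cancel₀ _ (hα j (by omega))
  · have hzero : α j * downwardRecurrenceSolution α β n j = 0 := by
      rcases lt_trichotomy j n with hlt | rfl | hgt
      · simp [downwardRecurrenceSolution, hlt.le, show n - j = 1 by omega,
          downwardRecurrenceSolution.fromTop]
      · rw [hαn, zero_mul]
      · simp [downwardRecurrenceSolution, hgt.not_ge]
    rw [hzero]
    simp [downwardRecurrenceSolution, hj]

theorem IsDownwardSolution.unique (hα : ∀ j < n, α j ≠ 0) {g g' : ℕ → K}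
    (hg : IsDownwardSolution α β n g) (hg' : IsDownwardSolution α β n g') : g = g' := by
  obtain ⟨hgn, hg0, hgrec⟩ := hg
  obtain ⟨hgn', hg0', hgrec'⟩ := hg'
  have htop : ∀ j, n ≤ j → g j = g' j := by
    intro j hj
    rcases hj.eq_or_lt with rfl | hlt
    · rw [hgn, hgn']
    · rw [hg0 j hlt, hg0' j hlt]
  have hdown : ∀ d j, n ≤ j + d → g j = g' j := by
    intro d
    induction d with
    | zero => exact htop
    | succ d ih =>
      intro j hj
      rcases le_or_gt n j with hnj | hjn
      · exact htop j hnj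
      · refine mul_left_cancel₀ (hα j hjn) ?_
        rw [hgrec, hgrec', ih (j + 2) (by omega)]
  exact funext fun j => hdown n j (by omega)

end DownwardRecurrence

namespace Macdonald

variable {K : Type*} [Field K]

def eigenvalue (q t : K) (n : ℤ) : K := t * q ^ (2 * n) + t⁻¹ * q ^ (-2 * n)

/-- `(X⁻¹ - X) · L_{q,t} f`, where `yhm` and `yhp` stand for `f(X) ↦ f(q⁻²X)` and
`f(X) ↦ f(q²X)`. -/
def operator (t : K) (yhm yhp : Module.End K K[T;T⁻¹]) (f : K[T;T⁻¹]) : K[T;T⁻¹] :=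
  (t • T (-1) - t⁻¹ • T 1) * yhm f + (t⁻¹ • T (-1) - t • T 1) * yhp f

section Operator

variable {q t : K} {yhm yhp : Module.End K K[T;T⁻¹]}
  (hym : ∀ n : ℤ, yhm (T n) = q ^ (-2 * n) • T n)
  (hyp : ∀ n : ℤ, yhp (T n) = q ^ (2 * n) • T n)
include hym hyp

theorem coeff_operator (f : K[T;T⁻¹]) (k : ℤ) :
    (operator t yhm yhp f).coeff k =
      eigenvalue q t (-(k + 1)) * f.coeff (k + 1) - eigenvalue q t (k - 1) * f.coeff (k - 1) := by
  have hm := coeff_map_of_map_T yhm (Equiv.refl ℤ) _ hym f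
  have hp := coeff_map_of_map_T yhp (Equiv.refl ℤ) _ hyp f
  simp only [Equiv.refl_apply] at hm hp
  simp only [operator, sub_mul, smul_mul_assoc, AddMonoidAlgebra.coeff_add,
    AddMonoidAlgebra.coeff_sub, Finsupp.add_apply, Finsupp.sub_apply,
    AddMonoidAlgebra.coeff_smul_apply, coeff_T_mul, hm, hp, sub_neg_eq_add, smul_eq_mul,
    eigenvalue, mul_neg, neg_mul, neg_neg]
  ring

theorem operator_eq_smul_iff (c : K) (f : K[T;T⁻¹]) :
    operator t yhm yhp f = c • ((T (-1) - T 1) * f) ↔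
      ∀ k : ℤ, (eigenvalue q t (-(k + 1)) - c) * f.coeff (k + 1) =
        (eigenvalue q t (k - 1) - c) * f.coeff (k - 1) := by
  rw [LaurentPolynomial.ext_iff]
  refine forall_congr' fun k => ?_
  rw [coeff_operator hym hyp]
  simp only [AddMonoidAlgebra.coeff_smul_apply, sub_mul, AddMonoidAlgebra.coeff_sub,
    Finsupp.sub_apply, coeff_T_mul, sub_neg_eq_add, smul_eq_mul]
  constructor <;> intro h <;> linear_combination h

theorem operator_eq_smul_iff_of_map_eq_self {sh : Module.End K K[T;T⁻¹]}
    (hs : ∀ n : ℤ, sh (T n) = T (-n)) {f : K[T;T⁻¹]} (hf : sh f = f) (c : K) :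
    operator t yhm yhp f = c • ((T (-1) - T 1) * f) ↔
      ∀ j : ℕ, (eigenvalue q t j - c) * f.coeff j =
        (eigenvalue q t (-↑(j + 2)) - c) * f.coeff ↑(j + 2) :=
  (operator_eq_smul_iff hym hyp c f).trans
    (forall_int_recurrence_iff_forall_nat _ c (coeff_neg_of_map_eq_self hs hf))

end Operator

section Polynomials

variable {q t : K} {sh yhm yhp : Module.End K K[T;T⁻¹]}
  (hdist : Function.Injective fun n : ℕ => eigenvalue q t n)
  (hs : ∀ n : ℤ, sh (T n) = T (-n))
  (hym : ∀ n : ℤ, yhm (T n) = q ^ (-2 * n) • T n)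
  (hyp : ∀ n : ℤ, yhp (T n) = q ^ (2 * n) • T n)

variable (q t) in
def polynomial (n : ℕ) : K[T;T⁻¹] :=
  symmetricOfCoeff (downwardRecurrenceSolution (fun j => eigenvalue q t j - eigenvalue q t n)
    (fun j => eigenvalue q t (-↑(j + 2)) - eigenvalue q t n) n) n

include hdist in
theorem isDownwardSolution_coeff_polynomial [NeZero (2 : K)] (n : ℕ) :
    IsDownwardSolution (fun j => eigenvalue q t j - eigenvalue q t n)
      (fun j => eigenvalue q t (-↑(j + 2)) - eigenvalue q t n) n
      (fun j : ℕ => (polynomial q t n).coeff j) := by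
  have hsol := isDownwardSolution_downwardRecurrenceSolution
    (fun j => eigenvalue q t j - eigenvalue q t n)
    (fun j => eigenvalue q t (-↑(j + 2)) - eigenvalue q t n) n
    (fun j hj => sub_ne_zero.2 (hdist.ne hj.ne)) (sub_self _)
  simpa only [polynomial, coeff_symmetricOfCoeff hsol.2.1] using hsol

include hs in
theorem map_polynomial (n : ℕ) : sh (polynomial q t n) = polynomial q t n :=
  map_symmetricOfCoeff hs _ n

include hdist hs hym hyp in
theorem operator_polynomial [NeZero (2 : K)] (n : ℕ) :
    operator t yhm yhp (polynomial q t n) =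
      eigenvalue q t n • ((T (-1) - T 1) * polynomial q t n) :=
  (operator_eq_smul_iff_of_map_eq_self hym hyp hs (map_polynomial hs n) _).2
    (isDownwardSolution_coeff_polynomial hdist n).2.2

variable (q t) in
theorem polynomial_zero [NeZero (2 : K)] : polynomial q t 0 = 1 :=
  symmetricOfCoeff_zero (downwardRecurrenceSolution_self _ _ 0)

variable (q t) in
theorem polynomial_eq_T_add_T_neg_add_sum {n : ℕ} (hn : n ≠ 0) :
    polynomial q t n = T n + T (-n) + ∑ m ∈ range n,
      (downwardRecurrenceSolution (fun j => eigenvalue q t j - eigenvalue q t n)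
        (fun j => eigenvalue q t (-↑(j + 2)) - eigenvalue q t n) n m / if m = 0 then 2 else 1) •
        (T m + T (-m)) :=
  symmetricOfCoeff_eq (downwardRecurrenceSolution_self _ _ n) hn

include hdist hs hym hyp in
theorem eq_polynomial [NeZero (2 : K)] {n : ℕ} {p : K[T;T⁻¹]} (hp : sh p = p)
    (heig : operator t yhm yhp p = eigenvalue q t n • ((T (-1) - T 1) * p))
    (hnorm : ∀ k : ℕ, n ≤ k → p.coeff k = if k = n then 1 else 0) :
    p = polynomial q t n := by
  have hsol : IsDownwardSolution (fun j => eigenvalue q t j - eigenvalue q t n)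
      (fun j => eigenvalue q t (-↑(j + 2)) - eigenvalue q t n) n (fun j : ℕ => p.coeff j) :=
    ⟨by simpa using hnorm n le_rfl, fun k hk => by simpa [hk.ne'] using hnorm k hk.le,
      (operator_eq_smul_iff_of_map_eq_self hym hyp hs hp _).1 heig⟩
  refine eq_of_map_eq_self_of_coeff_natCast_eq hs hp (map_polynomial hs n) fun j => ?_
  exact congrFun (hsol.unique _ _ n (fun j hj => sub_ne_zero.2 (hdist.ne hj.ne))
    (isDownwardSolution_coeff_polynomial hdist n)) j

end Polynomials

end Macdonald

open Macdonald

open LaurentPolynomial in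
theorem macdonald_polynomials_exist_unique_general (q t : ℂ)
    (sh yhm yhp : Module.End ℂ (LaurentPolynomial ℂ))
    (hs : ∀ n : ℤ, sh (T n) = T (-n))
    (hym : ∀ n : ℤ, yhm (T n) = q ^ (-2 * n) • T n)
    (hyp : ∀ n : ℤ, yhp (T n) = q ^ (2 * n) • T n)
    (hdist : Function.Injective
      fun n : ℕ => t * q ^ (2 * (n : ℤ)) + t⁻¹ * q ^ (-2 * (n : ℤ))) :
    ∃! p : ℕ → LaurentPolynomial ℂ,
      (∀ n : ℕ, sh (p n) = p n) ∧
      (∀ n : ℕ,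
        (t • T (-1) - t⁻¹ • T 1) * yhm (p n) + (t⁻¹ • T (-1) - t • T 1) * yhp (p n) =
          (t * q ^ (2 * (n : ℤ)) + t⁻¹ * q ^ (-2 * (n : ℤ))) • ((T (-1) - T 1) * p n)) ∧
      p 0 = 1 ∧
      (∀ n : ℕ, 1 ≤ n → ∃ c : ℕ → ℂ,
        p n = T (n : ℤ) + T (-(n : ℤ)) +
          ∑ m ∈ Finset.range n, c m • (T (m : ℤ) + T (-(m : ℤ)))) := by
  refine ⟨polynomial q t, ⟨map_polynomial hs, operator_polynomial hdist hs hym hyp,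
    polynomial_zero q t, fun n hn => ⟨_, polynomial_eq_T_add_T_neg_add_sum q t (by omega)⟩⟩, ?_⟩
  rintro p ⟨hsym, heig, h0, hshape⟩
  funext n
  refine eq_polynomial hdist hs hym hyp (hsym n) (heig n) fun k hk => ?_
  rcases Nat.eq_zero_or_pos n with rfl | hn
  · rw [h0, ← T_zero, T_apply]
    simp [eq_comm]
  · obtain ⟨c, hc⟩ := hshape n hn
    rw [hc, coeff_T_add_T_neg_add_sum_of_le c hn.ne' hk]

open LaurentPolynomial in
/-- **Macdonald polynomials of type `A₁`**: if the numbers `t·q^{2n} + t⁻¹·q^{-2n}` (`n ≥ 0`)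
are pairwise distinct, there is a unique family `(p_n)` of symmetric Laurent polynomials with
`L_{q,t}(p_n) = (t·q^{2n} + t⁻¹·q^{-2n})·p_n` (stated multiplied through by `X⁻¹ - X`),
`p_0 = 1` and `p_n = Xⁿ + X⁻ⁿ + Σ_{0 ≤ m < n} c_m (X^m + X^{-m})` for `n ≥ 1`.
Here `sh : f(X) ↦ f(X⁻¹)`, `yhm : f(X) ↦ f(q⁻²X)`, `yhp : f(X) ↦ f(q²X)`. -/
theorem macdonald_polynomials_exist_unique (q t : ℂ) (hq : q ≠ 0) (ht : t ≠ 0)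
    (sh yhm yhp : Module.End ℂ (LaurentPolynomial ℂ))
    (hs : ∀ n : ℤ, sh (T n) = T (-n))
    (hym : ∀ n : ℤ, yhm (T n) = q ^ (-2 * n) • T n)
    (hyp : ∀ n : ℤ, yhp (T n) = q ^ (2 * n) • T n)
    (hdist : Function.Injective
      fun n : ℕ => t * q ^ (2 * (n : ℤ)) + t⁻¹ * q ^ (-2 * (n : ℤ))) :
    ∃! p : ℕ → LaurentPolynomial ℂ,
      (∀ n : ℕ, sh (p n) = p n) ∧
      (∀ n : ℕ,
        (t • T (-1) - t⁻¹ • T 1) * yhm (p n) + (t⁻¹ • T (-1) - t • T 1) * yhp (p n) =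
          (t * q ^ (2 * (n : ℤ)) + t⁻¹ * q ^ (-2 * (n : ℤ))) • ((T (-1) - T 1) * p n)) ∧
      p 0 = 1 ∧
      (∀ n : ℕ, 1 ≤ n → ∃ c : ℕ → ℂ,
        p n = T (n : ℤ) + T (-(n : ℤ)) +
          ∑ m ∈ Finset.range n, c m • (T (m : ℤ) + T (-(m : ℤ)))) :=
  macdonald_polynomials_exist_unique_general q t sh yhm yhp hs hym hyp hdist
end
end
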